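/- Let ℓ ≥ 1 and d ≤ m be positive integers and L > 0 a constant with d ≥ 4(Lℓ + 1). Let F be an m-vertex graph with minimum degree at least d-1 such that c_i(u,v;F) ≤ L for every edge uv of F and every 3 ≤ i ≤ 2ℓ. Define g_k(L) = ∏_{j=1}^{k-1} 2(Lj+1), so that g_1(L) = 1. Then for every vertex v of F and every 1 ≤ k ≤ ℓ, we have |Γ_k(v)| ≥ deg_F(v) · d^{k-1} / g_k(L). -/

import Mathlib

/-- `c_k(u,v;G)`: the number of cycles of length `k` in `G` containing the edge `uv`.
Each such cycle corresponds to a unique path from `u` to `v` of length `k-1`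
avoiding the edge `uv`. -/
noncomputable def cyclesThroughEdge {V : Type} (G : SimpleGraph V) (k : ℕ) (u v : V) : ℕ :=
  Nat.card {p : G.Walk u v // p.IsPath ∧ p.length = k - 1 ∧ s(u, v) ∉ p.edges}

/-- `Γ_k(v)`: the set of vertices at distance exactly `k` from `v`. -/
def distSphere {V : Type} (G : SimpleGraph V) (k : ℕ) (v : V) : Set V :=
  {u | G.dist v u = k}

/-- The constant `g_k(L) = ∏_{j=1}^{k-1} 2(Lj + 1)`, so that `g_1(L) = 1`. -/
noncomputable def gconst (L : ℝ) (k : ℕ) : ℝ :=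
  ∏ j ∈ Finset.Icc 1 (k - 1), 2 * (L * j + 1)

/-- The number of neighbors of a vertex (its degree). -/
noncomputable def ndeg {V : Type} (G : SimpleGraph V) (v : V) : ℕ :=
  Nat.card ↥(G.neighborSet v)

/-!
Fix `v` and let `S k` be the sphere of radius `k` around it. A vertex `u ∈ S k` has a neighbour
`w₀ ∈ S (k - 1)`. For every other neighbour `w` with `dist v w ≤ k`, the walk `u → w`, followed by
geodesics `w → v → w₀` with the repetitions removed, is a path from `u` to `w₀` with second
vertex `w` and length at most `2k`: distinct such `w` give distinct cycles through the edge
`uw₀`, at most `L` of each length. Hence `u` has at most `L(2k - 1) + 1` neighbours in the ball of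
radius `k`, so at least `d / 2` in `S (k + 1)`. For `y ∈ S (k + 1)` and two neighbours in `S k` the
same path has odd length, because every edge of a geodesic from `v` joins consecutive spheres;
only `k` cycle lengths remain, and `y` has at most `Lk + 1` neighbours in `S k`. Double counting
the edges between `S k` and `S (k + 1)` gives `d |S k| / 2 ≤ (Lk + 1) |S (k + 1)|`, and the
bound follows by induction on `k`.
-/

open Finset

namespace SimpleGraph

variable {V : Type} {F : SimpleGraph V}

lemma exists_adj_dist_add_one_eq {v u : V} (hu : F.dist v u ≠ 0) :
    ∃ w, F.Adj u w ∧ F.dist v w + 1 = F.dist v u := by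
  obtain ⟨p, hp⟩ := (Reachable.of_dist_ne_zero hu).symm.exists_walk_length_eq_dist
  rw [dist_comm] at hp
  have hnil : ¬p.Nil := fun h => hu (hp ▸ h.length_eq_zero)
  refine ⟨p.snd, p.adj_snd hnil, ?_⟩
  have htail : F.dist v p.snd ≤ p.tail.length := dist_comm (G := F) ▸ dist_le p.tail
  have hlen := p.length_tail_add_one hnil
  rcases (p.adj_snd hnil).diff_dist_adj (u := v) with h | h | h <;> omega

/-- A walk satisfying the length hypothesis extends a geodesic from `v`, so the distance from `v`
goes up by one at each of its steps. -/
lemma odd_dist_add_dist_of_mem_edges {v : V} : ∀ {u w : V} (p : F.Walk u w), F.Reachable v u →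
    p.length + F.dist v u = F.dist v w →
    ∀ {a b : V}, s(a, b) ∈ p.edges → Odd (F.dist v a + F.dist v b) := by
  intro u w p
  induction p with
  | nil => simp
  | @cons u x w hadj q ih =>
    intro hr hlen a b hab
    have hx : F.dist v x ≤ F.dist v u + 1 := by
      rcases hadj.diff_dist_adj (u := v) with h | h | h <;> omega
    have hw : F.dist v w ≤ F.dist v x + F.dist x w := q.reachable.dist_triangle_right v
    have hq : F.dist x w ≤ q.length := dist_le q
    rw [Walk.length_cons] at hlen
    rw [Walk.edges_cons, List.mem_cons] at hab
    rcases hab with hab | hab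
    · rw [Nat.odd_iff]
      rcases Sym2.eq_iff.mp hab with ⟨rfl, rfl⟩ | ⟨rfl, rfl⟩ <;> omega
    · exact ih (hr.trans hadj.reachable) (by omega) hab

lemma even_length_add_dist_add_dist {v : V} : ∀ {a b : V} (p : F.Walk a b),
    (∀ x y, s(x, y) ∈ p.edges → Odd (F.dist v x + F.dist v y)) →
    Even (p.length + F.dist v a + F.dist v b) := by
  intro a b p
  induction p with
  | nil => simp
  | @cons a x b hadj q ih =>
    intro h
    have hax := Nat.odd_iff.mp (h a x (by simp))
    have hq := Nat.even_iff.mp (ih fun x' y' hxy => h x' y' (by simp [hxy]))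
    rw [Nat.even_iff, Walk.length_cons]
    omega

lemma dist_lt_of_mem_support {v w y : V} (p : F.Walk v w) (hp : p.length = F.dist v w)
    (hy : y ∈ p.support) (hyw : y ≠ w) : F.dist v y < F.dist v w := by
  classical
  have hsplit : (p.takeUntil y hy).length + (p.dropUntil y hy).length = p.length := by
    rw [← Walk.length_append, p.take_spec hy]
  have hdrop : (p.dropUntil y hy).length ≠ 0 := fun h => hyw (Walk.eq_of_length_eq_zero h)
  have htake : F.dist v y ≤ (p.takeUntil y hy).length := dist_le _
  omega

lemma exists_isPath_snd_eq {v y w w₀ : V} (hyw : F.Adj y w) (hyw₀ : y ≠ w₀)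
    (hww₀ : w ≠ w₀) (hrw : F.Reachable v w) (hrw₀ : F.Reachable v w₀)
    (hw : F.dist v w ≤ F.dist v y) (hw₀ : F.dist v w₀ ≤ F.dist v y) :
    ∃ p : F.Walk y w₀, p.IsPath ∧ s(y, w₀) ∉ p.edges ∧ p.snd = w ∧
      2 ≤ p.length ∧ p.length ≤ 1 + F.dist v w + F.dist v w₀ ∧
      Odd (p.length + F.dist v w + F.dist v w₀) := by
  classical
  obtain ⟨pw, hpw⟩ := hrw.exists_walk_length_eq_dist
  obtain ⟨pw₀, hpw₀⟩ := hrw₀.exists_walk_length_eq_dist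
  set t := (pw.reverse.append pw₀).bypass
  have hy : y ∉ t.support := by
    intro h
    rcases (Walk.mem_support_append_iff _ _).mp (Walk.support_bypass_subset_support _ h) with h | h
    · rw [Walk.support_reverse, List.mem_reverse] at h
      exact (dist_lt_of_mem_support pw hpw h hyw.ne).not_ge hw
    · exact (dist_lt_of_mem_support pw₀ hpw₀ h hyw₀).not_ge hw₀
  have hlen : t.length ≤ F.dist v w + F.dist v w₀ := by
    have := (pw.reverse.append pw₀).length_bypass_le_length
    rwa [Walk.length_append, Walk.length_reverse, hpw, hpw₀] at this
  have hpos : t.length ≠ 0 := fun h => hww₀ (Walk.eq_of_length_eq_zero h)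
  have hpar : Even (t.length + F.dist v w + F.dist v w₀) := by
    refine even_length_add_dist_add_dist t fun x z hxz => ?_
    rcases List.mem_append.mp (Walk.edges_append _ _ ▸ Walk.edges_bypass_subset_edges _ hxz)
      with h | h
    · rw [Walk.edges_reverse, List.mem_reverse] at h
      exact odd_dist_add_dist_of_mem_edges pw (Reachable.refl v) (by simp [hpw]) h
    · exact odd_dist_add_dist_of_mem_edges pw₀ (Reachable.refl v) (by simp [hpw₀]) h
  refine ⟨.cons hyw t, (Walk.bypass_isPath _).cons hy, ?_, Walk.snd_cons _ _, ?_, ?_, ?_⟩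
  · rw [Walk.edges_cons, List.mem_cons, not_or]
    refine ⟨fun h => ?_, fun h => hy (t.fst_mem_support_of_mem_edges h)⟩
    rcases Sym2.eq_iff.mp h with ⟨-, h⟩ | ⟨-, h⟩
    exacts [hww₀ h.symm, hyw₀ h.symm]
  · rw [Walk.length_cons]; omega
  · rw [Walk.length_cons]; omega
  · rw [Walk.length_cons, Nat.odd_iff]; rw [Nat.even_iff] at hpar; omega

lemma card_le_cyclesThroughEdge {y w₀ : V} {j : ℕ} [Finite V] (W : Finset V)
    (hW : ∀ w ∈ W, ∃ p : F.Walk y w₀,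
      p.IsPath ∧ p.length = j ∧ s(y, w₀) ∉ p.edges ∧ p.snd = w) :
    #W ≤ cyclesThroughEdge F (j + 1) y w₀ := by
  classical
  have := Fintype.ofFinite V
  choose g hg using hW
  have : Finite {p : F.Walk y w₀ // p.IsPath ∧ p.length = j ∧ s(y, w₀) ∉ p.edges} :=
    Finite.of_injective (fun p => (⟨p.1, p.2.2.1⟩ : {p : F.Walk y w₀ // p.length = j}))
      fun p q h => Subtype.ext (Subtype.mk_eq_mk.mp h)
  rw [cyclesThroughEdge, Nat.add_sub_cancel, ← Nat.card_eq_finsetCard]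
  refine Nat.card_le_card_of_injective
    (fun w => ⟨g w.1 w.2, (hg w.1 w.2).1, (hg w.1 w.2).2.1, (hg w.1 w.2).2.2.1⟩) ?_
  intro w w' h
  have := congrArg (fun p => Walk.snd (Subtype.val p)) h
  simp only [(hg _ _).2.2.2] at this
  exact Subtype.ext this

lemma card_le_mul_card_add_one [Finite V] {y w₀ : V} {L : ℝ} (B : Finset V) (J : Finset ℕ)
    (hJ : ∀ j ∈ J, (cyclesThroughEdge F (j + 1) y w₀ : ℝ) ≤ L)
    (hB : ∀ w ∈ B, w ≠ w₀ → ∃ p : F.Walk y w₀,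
      p.IsPath ∧ p.length ∈ J ∧ s(y, w₀) ∉ p.edges ∧ p.snd = w) :
    (#B : ℝ) ≤ L * #J + 1 := by
  classical
  set fiber : ℕ → Finset V := fun j => {w ∈ B.erase w₀ | ∃ p : F.Walk y w₀,
    p.IsPath ∧ p.length = j ∧ s(y, w₀) ∉ p.edges ∧ p.snd = w}
  have hcover : B.erase w₀ ⊆ J.biUnion fiber := by
    intro w hw
    obtain ⟨p, hp, hlen, hedge, hsnd⟩ := hB w (mem_erase.mp hw).2 (mem_erase.mp hw).1
    exact mem_biUnion.mpr ⟨p.length, hlen, mem_filter.mpr ⟨hw, p, hp, rfl, hedge, hsnd⟩⟩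
  have hfiber : ∀ j ∈ J, (#(fiber j) : ℝ) ≤ L := fun j hj =>
    (Nat.cast_le.mpr (card_le_cyclesThroughEdge _ fun w hw => (mem_filter.mp hw).2)).trans
      (hJ j hj)
  have herase : (#(B.erase w₀) : ℝ) ≤ L * #J := by
    calc (#(B.erase w₀) : ℝ) ≤ ∑ j ∈ J, (#(fiber j) : ℝ) := by
          exact_mod_cast (card_le_card hcover).trans card_biUnion_le
      _ ≤ #J • L := sum_le_card_nsmul _ _ _ hfiber
      _ = L * #J := by rw [nsmul_eq_mul, mul_comm]
  have : #B ≤ #(B.erase w₀) + 1 := by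
    have := pred_card_le_card_erase (s := B) (a := w₀)
    omega
  have : (#B : ℝ) ≤ #(B.erase w₀) + 1 := by exact_mod_cast this
  linarith

variable [Fintype V] [DecidableRel F.Adj]

lemma card_adj_dist_le_le {v u : V} {k : ℕ} {L : ℝ} (hk : 1 ≤ k)
    (hu : F.dist v u = k)
    (hc : ∀ w, F.Adj u w → ∀ i, 3 ≤ i → i ≤ 2 * k + 1 →
      (cyclesThroughEdge F i u w : ℝ) ≤ L) :
    (#{w | F.Adj u w ∧ F.dist v w ≤ k} : ℝ) ≤ L * (2 * k - 1) + 1 := by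
  obtain ⟨w₀, hadj₀, hw₀⟩ := exists_adj_dist_add_one_eq (show F.dist v u ≠ 0 by omega)
  have hru : F.Reachable v u := Reachable.of_dist_ne_zero (by omega)
  have hJ : (#(Icc 2 (2 * k)) : ℝ) = 2 * k - 1 := by
    rw [Nat.card_Icc, Nat.cast_sub (by omega)]
    push_cast
    ring
  rw [← hJ]
  refine card_le_mul_card_add_one (F := F) (y := u) (w₀ := w₀) _ _ (fun j hj => ?_)
    fun w hw hne => ?_
  · rw [mem_Icc] at hj
    exact hc w₀ hadj₀ (j + 1) (by omega) (by omega)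
  · obtain ⟨hadj, hw⟩ := (mem_filter.mp hw).2
    obtain ⟨p, hp, hedge, hsnd, hlen₁, hlen₂, -⟩ := exists_isPath_snd_eq hadj hadj₀.ne hne
      (hru.trans hadj.reachable) (hru.trans hadj₀.reachable) (by omega) (by omega)
    exact ⟨p, hp, mem_Icc.mpr ⟨hlen₁, by omega⟩, hedge, hsnd⟩

lemma card_adj_dist_eq_le {v y : V} {k : ℕ} {L : ℝ} (hy : F.dist v y = k + 1)
    (hc : ∀ w, F.Adj y w → ∀ i, 3 ≤ i → i ≤ 2 * k + 2 →
      (cyclesThroughEdge F i y w : ℝ) ≤ L) :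
    (#{w | F.Adj y w ∧ F.dist v w = k} : ℝ) ≤ L * k + 1 := by
  obtain ⟨w₀, hadj₀, hw₀⟩ := exists_adj_dist_add_one_eq (show F.dist v y ≠ 0 by omega)
  have hry : F.Reachable v y := Reachable.of_dist_ne_zero (by omega)
  have hJ : (#((Icc 1 k).image fun t => 2 * t + 1) : ℝ) = k := by
    rw [card_image_of_injective _ fun a b h => by simpa using h, Nat.card_Icc]
    simp
  rw [← hJ]
  refine card_le_mul_card_add_one (F := F) (y := y) (w₀ := w₀) _ _ (fun j hj => ?_)
    fun w hw hne => ?_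
  · obtain ⟨t, ht, rfl⟩ := mem_image.mp hj
    rw [mem_Icc] at ht
    exact hc w₀ hadj₀ _ (by omega) (by omega)
  · obtain ⟨hadj, hw⟩ := (mem_filter.mp hw).2
    obtain ⟨p, hp, hedge, hsnd, hlen₁, hlen₂, hodd⟩ := exists_isPath_snd_eq hadj hadj₀.ne
      hne (hry.trans hadj.reachable) (hry.trans hadj₀.reachable) (by omega) (by omega)
    rw [Nat.odd_iff] at hodd
    refine ⟨p, hp, mem_image.mpr ⟨p.length / 2, mem_Icc.mpr ⟨?_, ?_⟩, ?_⟩, hedge, hsnd⟩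
      <;> omega

lemma le_card_dist_eq_add_one_adj {v u : V} {k d : ℕ} {L : ℝ} (hL : 0 ≤ L)
    (hdL : 4 * (L * (k + 1) + 1) ≤ d) (hdeg : (d : ℝ) - 1 ≤ F.degree u) (hk : 1 ≤ k)
    (hu : F.dist v u = k)
    (hc : ∀ w, F.Adj u w → ∀ i, 3 ≤ i → i ≤ 2 * k + 1 →
      (cyclesThroughEdge F i u w : ℝ) ≤ L) :
    (d : ℝ) / 2 ≤ #{y | F.dist v y = k + 1 ∧ F.Adj u y} := by
  classical
  have hsplit : F.degree u ≤ #{y | F.dist v y = k + 1 ∧ F.Adj u y} +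
      #{w | F.Adj u w ∧ F.dist v w ≤ k} := by
    rw [← card_neighborFinset_eq_degree]
    refine (card_le_card fun w hw => ?_).trans (card_union_le _ _)
    have hadj := (mem_neighborFinset _ _ _).mp hw
    simp only [mem_union, mem_filter, mem_univ, hadj, true_and, and_true]
    rcases hadj.diff_dist_adj (u := v) with h | h | h <;> omega
  have hfew := card_adj_dist_le_le hk hu hc
  have : (F.degree u : ℝ) ≤ #{y | F.dist v y = k + 1 ∧ F.Adj u y} +
      #{w | F.Adj u w ∧ F.dist v w ≤ k} := by exact_mod_cast hsplit
  linarith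

lemma mul_card_sphere_le {v : V} {k d : ℕ} {L : ℝ} (hL : 0 ≤ L)
    (hdL : 4 * (L * (k + 1) + 1) ≤ d) (hdeg : ∀ u, (d : ℝ) - 1 ≤ F.degree u) (hk : 1 ≤ k)
    (hc : ∀ u w, F.Adj u w → ∀ i, 3 ≤ i → i ≤ 2 * k + 2 →
      (cyclesThroughEdge F i u w : ℝ) ≤ L) :
    (d : ℝ) / 2 * #{u | F.dist v u = k} ≤ (L * k + 1) * #{u | F.dist v u = k + 1} := by
  have := card_nsmul_le_card_nsmul (s := {u | F.dist v u = k}) (t := {u | F.dist v u = k + 1})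
    F.Adj (m := (d : ℝ) / 2) (n := L * k + 1) ?_ ?_
  · simpa only [nsmul_eq_mul, mul_comm] using this
  · intro u hu
    rw [bipartiteAbove, filter_filter]
    exact le_card_dist_eq_add_one_adj hL hdL (hdeg u) hk (mem_filter.mp hu).2
      fun w hw i h3 hi => hc u w hw i h3 (by omega)
  · intro y hy
    have hbelow : ({u | F.dist v u = k} : Finset V).bipartiteBelow F.Adj y =
        ({w | F.Adj y w ∧ F.dist v w = k} : Finset V) := by
      ext w
      simp [bipartiteBelow, adj_comm, and_comm]
    rw [hbelow]
    exact card_adj_dist_eq_le (mem_filter.mp hy).2 fun w hw i h3 hi => hc y w hw i h3 hi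

lemma ndeg_eq_degree (v : V) : ndeg F v = F.degree v := by
  rw [ndeg, Nat.card_eq_fintype_card, card_neighborSet_eq_degree]

end SimpleGraph

lemma gconst_pos {L : ℝ} (hL : 0 ≤ L) (k : ℕ) : 0 < gconst L k :=
  prod_pos fun j _ => by positivity

lemma gconst_succ (L : ℝ) {k : ℕ} (hk : 1 ≤ k) :
    gconst L (k + 1) = gconst L k * (2 * (L * k + 1)) := by
  obtain ⟨j, rfl⟩ : ∃ j, k = j + 1 := ⟨k - 1, by omega⟩
  rw [gconst, gconst, Nat.add_sub_cancel, Nat.add_sub_cancel, prod_Icc_succ_top (by omega)]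

theorem statement_12_general (ℓ m d : ℕ) (L : ℝ) (hL : 0 < L)
    (hdL : 4 * (L * ℓ + 1) ≤ (d : ℝ))
    (F : SimpleGraph (Fin m))
    (hmin : ∀ w, (d : ℝ) - 1 ≤ (ndeg F w : ℝ))
    (hc : ∀ u v, F.Adj u v → ∀ i, 3 ≤ i → i ≤ 2 * ℓ → (cyclesThroughEdge F i u v : ℝ) ≤ L) :
    ∀ v : Fin m, ∀ k, 1 ≤ k → k ≤ ℓ →
      (ndeg F v : ℝ) * (d : ℝ) ^ (k - 1) / gconst L k ≤
        (Nat.card ↥(distSphere F k v) : ℝ) := by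
  classical
  intro v k hk hkℓ
  have hsphere (j : ℕ) : Nat.card (distSphere F j v) = #{u | F.dist v u = j} := by
    rw [distSphere, Nat.card_coe_set_eq, Set.ncard_eq_toFinset_card', Set.toFinset_ofPred]
  induction k, hk using Nat.le_induction with
  | base =>
    have : distSphere F 1 v = F.neighborSet v := Set.ext fun u => SimpleGraph.dist_eq_one_iff_adj
    simp [gconst, this, ndeg]
  | succ k hk ih =>
    have hLk : L * (k + 1) ≤ L * ℓ := by gcongr; exact_mod_cast hkℓ
    have hrec := SimpleGraph.mul_card_sphere_le (v := v) hL.le (by linarith)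
      (fun u => F.ndeg_eq_degree u ▸ hmin u) hk fun u w h i h3 hi => hc u w h i h3 (by omega)
    have hg := gconst_pos hL.le k
    have hS := (div_le_iff₀ hg).mp (hsphere k ▸ ih (by omega))
    rw [hsphere, gconst_succ L hk, div_le_iff₀ (by positivity)]
    calc (ndeg F v : ℝ) * (d : ℝ) ^ (k + 1 - 1)
        = (ndeg F v : ℝ) * (d : ℝ) ^ (k - 1) * d := by
          rw [mul_assoc, ← pow_succ, Nat.sub_add_cancel hk, Nat.add_sub_cancel]
      _ ≤ #{u | F.dist v u = k} * gconst L k * d := by gcongr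
      _ = 2 * gconst L k * ((d : ℝ) / 2 * #{u | F.dist v u = k}) := by ring
      _ ≤ 2 * gconst L k * ((L * k + 1) * #{u | F.dist v u = k + 1}) := by gcongr
      _ = #{u | F.dist v u = k + 1} * (gconst L k * (2 * (L * k + 1))) := by ring

/-- Expansion lemma: let `ℓ ≥ 1`, `d ≤ m`, `L > 0` with `d ≥ 4(Lℓ + 1)`, and let `F` be an
`m`-vertex graph with minimum degree at least `d - 1` such that `c_i(u,v;F) ≤ L` for every
edge `uv` and every `3 ≤ i ≤ 2ℓ`.  Then for every vertex `v` and every `1 ≤ k ≤ ℓ`,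
`|Γ_k(v)| ≥ deg_F(v) · d^{k-1} / g_k(L)`. -/
theorem statement_12 (ℓ m d : ℕ) (hℓ : 1 ≤ ℓ) (hdm : d ≤ m) (L : ℝ) (hL : 0 < L)
    (hdL : 4 * (L * ℓ + 1) ≤ (d : ℝ))
    (F : SimpleGraph (Fin m))
    (hmin : ∀ w, (d : ℝ) - 1 ≤ (ndeg F w : ℝ))
    (hc : ∀ u v, F.Adj u v → ∀ i, 3 ≤ i → i ≤ 2 * ℓ → (cyclesThroughEdge F i u v : ℝ) ≤ L) :
    ∀ v : Fin m, ∀ k, 1 ≤ k → k ≤ ℓ →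
      (ndeg F v : ℝ) * (d : ℝ) ^ (k - 1) / gconst L k ≤
        (Nat.card ↥(distSphere F k v) : ℝ) :=
  statement_12_general ℓ m d L hL hdL F hmin hc
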